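/- arXiv:1906.06868 — 3 statements merged into one kernel-verified Lean document; each statement's English description precedes it below -/
import Mathlib

section
/- For every n ≥ 0 and every 𝒰 = (U^0,…,U^{n+1}) ∈ 𝒢^{n+1}, setting K = sup over all grid points x_{i,j} and all m = 0,…,n+1 of |g(x_{i,j}, (D₁⁺U^m)_{i,j}, (D₁⁺U^m)_{i−1,j}, (D₂⁺U^m)_{i,j}, (D₂⁺U^m)_{i,j−1})|, one has ‖G^{n+1}(𝒰) − G^n(U^0,…,U^n)‖_∞ ≤ (1 − c_0^{n+2}) · max_{0 ≤ m ≤ n} ‖U^{m+1} − U^m‖_∞ + 2Γ(2−α)Δt^α K. -/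
noncomputable section

/-- The coefficients `c_m^{n+1}` of the discretization of the Caputo derivative. -/
def caputoCoeff (α : ℝ) (n m : ℕ) : ℝ :=
  if m = 0 then ((n : ℝ) + 1) ^ (1 - α) - (n : ℝ) ^ (1 - α)
  else 2 * ((n : ℝ) + 1 - (m : ℝ)) ^ (1 - α) - ((n : ℝ) + 2 - (m : ℝ)) ^ (1 - α)
    - ((n : ℝ) - (m : ℝ)) ^ (1 - α)

/-- A grid function on the uniform grid on the 2-torus with `M` points per direction. -/
abbrev GridFun (M : ℕ) := ZMod M × ZMod M → ℝ

/-- Forward difference in the first direction: `(D₁⁺U)_{i,j} = (U_{i+1,j} − U_{i,j})/h`. -/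
def D1 {M : ℕ} (h : ℝ) (U : GridFun M) (p : ZMod M × ZMod M) : ℝ :=
  (U (p.1 + 1, p.2) - U p) / h

/-- Forward difference in the second direction: `(D₂⁺U)_{i,j} = (U_{i,j+1} − U_{i,j})/h`. -/
def D2 {M : ℕ} (h : ℝ) (U : GridFun M) (p : ZMod M × ZMod M) : ℝ :=
  (U (p.1, p.2 + 1) - U p) / h

/-- `S(x_{i,j}, h, U) = g(x_{i,j}, (D₁⁺U)_{i,j}, (D₁⁺U)_{i−1,j}, (D₂⁺U)_{i,j}, (D₂⁺U)_{i,j−1})`,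
where `x_{i,j} = (ih, jh)`. -/
def schemeS {M : ℕ} (g : ℝ × ℝ → ℝ × ℝ × ℝ × ℝ → ℝ) (h : ℝ) (U : GridFun M)
    (p : ZMod M × ZMod M) : ℝ :=
  g ((p.1.val : ℝ) * h, (p.2.val : ℝ) * h)
    (D1 h U p, D1 h U (p.1 - 1, p.2), D2 h U p, D2 h U (p.1, p.2 - 1))

/-- The scheme operator
`G^n(𝒰)_{i,j} = ∑_{m=0}^{n} c_m^{n+1} U^m_{i,j} − ρ_α S(x_{i,j},h,U^n)`
with `ρ_α = Γ(2−α)Δt^α`. -/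
def schemeG {M : ℕ} (α Δt h : ℝ) (g : ℝ × ℝ → ℝ × ℝ × ℝ × ℝ → ℝ) (n : ℕ)
    (U : ℕ → GridFun M) : GridFun M :=
  fun p => (∑ m ∈ Finset.range (n + 1), caputoCoeff α n m * U m p)
    - Real.Gamma (2 - α) * Δt ^ α * schemeS g h (U n) p

/-!
Abel summation rewrites `∑_{m ≤ N} c_m^{N+1} u_m` as `u_N − ∑_{m < N} b_{N−m} (u_{m+1} − u_m)` with
`b_j = (j+1)^{1−α} − j^{1−α}`. Hence the time increment of the discrete Caputo sum is
`∑_{j ≤ n} (b_{n−j} − b_{n+1−j}) (u_{j+1} − u_j)`, whose weights are nonnegative by concavity of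
`x ↦ x^{1−α}` and telescope to `1 − b_{n+1} = 1 − c_0^{n+2}`. The two Hamiltonian terms add at most
`2 ρ_α K`.
-/

open Finset

/-- The L1 weights `b_j = (j+1)^s − j^s`; with `s = 1 − α` one has `c_0^{n+1} = b_n` and
`c_m^{n+1} = b_{n−m} − b_{n+1−m}` for `m ≥ 1`. -/
def l1Weight (s : ℝ) (j : ℕ) : ℝ := ((j : ℝ) + 1) ^ s - (j : ℝ) ^ s

lemma l1Weight_zero {s : ℝ} (hs : s ≠ 0) : l1Weight s 0 = 1 := by
  simp [l1Weight, Real.zero_rpow hs]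

/-- By concavity of `x ↦ x ^ s`, `b_{j+1} ≤ b_j` is the midpoint inequality at `j + 1`. -/
lemma l1Weight_antitone {s : ℝ} (hs0 : 0 ≤ s) (hs1 : s ≤ 1) : Antitone (l1Weight s) := by
  refine antitone_nat_of_succ_le fun j => ?_
  have hmid := (Real.concaveOn_rpow hs0 hs1).2 (Set.mem_Ici.2 (Nat.cast_nonneg j))
    (Set.mem_Ici.2 (by positivity : (0 : ℝ) ≤ j + 2)) (by norm_num : (0 : ℝ) ≤ 1 / 2)
    (by norm_num : (0 : ℝ) ≤ 1 / 2) (by norm_num)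
  rw [smul_eq_mul, smul_eq_mul, smul_eq_mul, smul_eq_mul,
    show (1 / 2 : ℝ) * j + 1 / 2 * (j + 2) = j + 1 by ring] at hmid
  simp only [l1Weight, Nat.cast_add, Nat.cast_one, add_assoc, one_add_one_eq_two]
  linarith

lemma caputoCoeff_zero_eq (α : ℝ) (N : ℕ) : caputoCoeff α N 0 = l1Weight (1 - α) N := by
  simp [caputoCoeff, l1Weight]

lemma caputoCoeff_succ_eq (α : ℝ) {N m : ℕ} (hm : m < N) :
    caputoCoeff α N (m + 1) = l1Weight (1 - α) (N - (m + 1)) - l1Weight (1 - α) (N - m) := by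
  obtain ⟨k, rfl⟩ : ∃ k, N = m + 1 + k := ⟨N - (m + 1), by omega⟩
  rw [show m + 1 + k - (m + 1) = k by omega, show m + 1 + k - m = k + 1 by omega]
  simp only [caputoCoeff, l1Weight, Nat.add_one_ne_zero, if_false, Nat.cast_add, Nat.cast_one]
  ring_nf

lemma abel_summation (e u : ℕ → ℝ) (N : ℕ) :
    e 0 * u 0 + ∑ m ∈ range N, (e (m + 1) - e m) * u (m + 1)
      = e N * u N - ∑ m ∈ range N, e m * (u (m + 1) - u m) := by
  induction N with
  | zero => simp
  | succ N ih => rw [sum_range_succ, sum_range_succ, ← add_assoc, ih]; ring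

lemma sum_caputoCoeff_mul_eq {α : ℝ} (hα : α ≠ 1) (N : ℕ) (u : ℕ → ℝ) :
    ∑ m ∈ range (N + 1), caputoCoeff α N m * u m
      = u N - ∑ m ∈ range N, l1Weight (1 - α) (N - m) * (u (m + 1) - u m) := by
  have hs : 1 - α ≠ 0 := sub_ne_zero.2 hα.symm
  rw [sum_range_succ', add_comm, caputoCoeff_zero_eq,
    sum_congr rfl fun m hm => by rw [caputoCoeff_succ_eq α (mem_range.1 hm)]]
  simpa [l1Weight_zero hs] using abel_summation (fun m => l1Weight (1 - α) (N - m)) u N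

lemma sum_caputoCoeff_succ_sub {α : ℝ} (hα : α ≠ 1) (n : ℕ) (u : ℕ → ℝ) :
    ∑ m ∈ range (n + 2), caputoCoeff α (n + 1) m * u m
        - ∑ m ∈ range (n + 1), caputoCoeff α n m * u m
      = ∑ j ∈ range (n + 1),
          (l1Weight (1 - α) (n - j) - l1Weight (1 - α) (n + 1 - j)) * (u (j + 1) - u j) := by
  have hs : 1 - α ≠ 0 := sub_ne_zero.2 hα.symm
  simp only [sum_caputoCoeff_mul_eq hα, sub_mul, sum_sub_distrib, sum_range_succ _ n,
    Nat.sub_self, l1Weight_zero hs]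
  ring

lemma sum_l1Weight_sub_eq {s : ℝ} (hs : s ≠ 0) (n : ℕ) :
    ∑ j ∈ range (n + 1), (l1Weight s (n - j) - l1Weight s (n + 1 - j))
      = 1 - l1Weight s (n + 1) := by
  have := sum_range_sub (fun j => l1Weight s (n + 1 - j)) (n + 1)
  simpa only [Nat.add_sub_add_right, Nat.sub_self, Nat.sub_zero, l1Weight_zero hs] using this

/-- The weights `b_{n−j} − b_{n+1−j}` are nonnegative and sum to `1 − b_{n+1}`. -/
lemma abs_sum_caputoCoeff_succ_sub_le {α : ℝ} (hα0 : 0 ≤ α) (hα1 : α < 1) {n : ℕ}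
    {u : ℕ → ℝ} {D : ℝ} (hD : ∀ j ≤ n, |u (j + 1) - u j| ≤ D) :
    |∑ m ∈ range (n + 2), caputoCoeff α (n + 1) m * u m
        - ∑ m ∈ range (n + 1), caputoCoeff α n m * u m|
      ≤ (1 - caputoCoeff α (n + 1) 0) * D := by
  have hw : ∀ j, 0 ≤ l1Weight (1 - α) (n - j) - l1Weight (1 - α) (n + 1 - j) := fun j =>
    sub_nonneg.2 (l1Weight_antitone (by linarith) (by linarith) (by omega))
  rw [sum_caputoCoeff_succ_sub hα1.ne, caputoCoeff_zero_eq,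
    ← sum_l1Weight_sub_eq (by linarith) n, sum_mul]
  refine (abs_sum_le_sum_abs _ _).trans (sum_le_sum fun j hj => ?_)
  rw [abs_mul, abs_of_nonneg (hw j)]
  exact mul_le_mul_of_nonneg_left (hD j (Nat.lt_succ_iff.1 (mem_range.1 hj))) (hw j)

lemma le_ciSup_ciSup_of_finite {ι κ : Type*} [Finite ι] [Finite κ] (f : ι → κ → ℝ)
    (i : ι) (k : κ) : f i k ≤ ⨆ i, ⨆ k, f i k :=
  (le_ciSup (Finite.bddAbove_range _) k).trans
    (le_ciSup (Finite.bddAbove_range fun i => ⨆ k, f i k) i)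

theorem schemeG_time_increment_general (α Δt : ℝ) (hα : α ∈ Set.Ioo (0 : ℝ) 1) (hΔt : 0 < Δt)
    (M : ℕ) [NeZero M] (h : ℝ)
    (g : ℝ × ℝ → ℝ × ℝ × ℝ × ℝ → ℝ) (n : ℕ) (U : ℕ → GridFun M) :
    (⨆ p, |schemeG α Δt h g (n + 1) U p - schemeG α Δt h g n U p|)
      ≤ (1 - caputoCoeff α (n + 1) 0)
          * (⨆ m : Fin (n + 1), ⨆ p, |U ((m : ℕ) + 1) p - U (m : ℕ) p|)
        + 2 * Real.Gamma (2 - α) * Δt ^ α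
          * (⨆ m : Fin (n + 2), ⨆ p, |schemeS g h (U (m : ℕ)) p|) := by
  obtain ⟨hα0, hα1⟩ := hα
  set ρ := Real.Gamma (2 - α) * Δt ^ α
  set K := ⨆ m : Fin (n + 2), ⨆ p, |schemeS g h (U (m : ℕ)) p|
  have hρ : 0 ≤ ρ := mul_nonneg (Real.Gamma_pos_of_pos (by linarith)).le (by positivity)
  refine ciSup_le fun p => ?_
  have hS : ∀ j ≤ n + 1, |schemeS g h (U j) p| ≤ K := fun j hj =>
    le_ciSup_ciSup_of_finite (fun (m : Fin (n + 2)) q => |schemeS g h (U m) q|)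
      ⟨j, Nat.lt_succ_of_le hj⟩ p
  have hcaputo := abs_sum_caputoCoeff_succ_sub_le hα0.le hα1 (u := fun m => U m p)
    fun j hj => le_ciSup_ciSup_of_finite (fun (m : Fin (n + 1)) q => |U (m + 1) q - U m q|)
      ⟨j, Nat.lt_succ_of_le hj⟩ p
  calc |schemeG α Δt h g (n + 1) U p - schemeG α Δt h g n U p|
      = |(∑ m ∈ range (n + 2), caputoCoeff α (n + 1) m * U m p
            - ∑ m ∈ range (n + 1), caputoCoeff α n m * U m p)
          - ρ * (schemeS g h (U (n + 1)) p - schemeS g h (U n) p)| := by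
        congr 1; simp only [schemeG, ρ]; ring
    _ ≤ (1 - caputoCoeff α (n + 1) 0)
          * (⨆ m : Fin (n + 1), ⨆ p, |U ((m : ℕ) + 1) p - U (m : ℕ) p|) + ρ * (K + K) := by
        refine (abs_sub _ _).trans (add_le_add hcaputo ?_)
        rw [abs_mul, abs_of_nonneg hρ]
        exact mul_le_mul_of_nonneg_left
          ((abs_sub _ _).trans (add_le_add (hS _ le_rfl) (hS n n.le_succ))) hρ
    _ = _ := by ring

/-- with `K = sup_{x_{i,j}, 0 ≤ m ≤ n+1} |g(x_{i,j}, [D_h U^m]_{i,j})|`,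
`‖G^{n+1}(𝒰) − G^n(U^0,…,U^n)‖_∞
  ≤ (1 − c_0^{n+2}) max_{0 ≤ m ≤ n} ‖U^{m+1} − U^m‖_∞ + 2Γ(2−α)Δt^α K`. -/
theorem schemeG_time_increment (α Δt : ℝ) (hα : α ∈ Set.Ioo (0 : ℝ) 1) (hΔt : 0 < Δt)
    (M : ℕ) [NeZero M] (h : ℝ) (hh : h = 1 / (M : ℝ))
    (g : ℝ × ℝ → ℝ × ℝ × ℝ × ℝ → ℝ) (n : ℕ) (U : ℕ → GridFun M) :
    (⨆ p, |schemeG α Δt h g (n + 1) U p - schemeG α Δt h g n U p|)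
      ≤ (1 - caputoCoeff α (n + 1) 0)
          * (⨆ m : Fin (n + 1), ⨆ p, |U ((m : ℕ) + 1) p - U (m : ℕ) p|)
        + 2 * Real.Gamma (2 - α) * Δt ^ α
          * (⨆ m : Fin (n + 2), ⨆ p, |schemeS g h (U (m : ℕ)) p|) :=
  schemeG_time_increment_general α Δt hα hΔt M h g n U

end
end

section
/- Assume the scheme operator G^n is monotone and the numerical Hamiltonian g is consistent with a Hamiltonian H, i.e. g(x, q₁, q₁, q₂, q₂) = H(x, (q₁,q₂)) for all x ∈ 𝕋² and (q₁,q₂) ∈ ℝ². Then for every 𝒰 ∈ 𝒢^n, ‖G^n(𝒰)‖_∞ ≤ ‖𝒰‖_∞ + Γ(2−α) Δt^α · sup_{x ∈ 𝕋²} |H(x, 0)|, provided the supremum on the right is finite. -/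
noncomputable section

/-! The Caputo weights sum to one, so `G^n` maps the constant family `K` to
`K - ρ_α H(x, 0)`. Monotonicity sandwiches `G^n(𝒰)` between the images of the constant
families `-‖𝒰‖_∞` and `‖𝒰‖_∞`. -/

theorem sum_caputoCoeff {α : ℝ} (hα : α ≠ 1) (n : ℕ) :
    ∑ m ∈ Finset.range (n + 1), caputoCoeff α n m = 1 := by
  -- `c_0 = b 0` and `c_{m+1} = b (m+1) - b m`, so the sum telescopes to `b n = 1 - 0 ^ (1 - α)`.
  let b : ℕ → ℝ := fun m => ((n : ℝ) + 1 - m) ^ (1 - α) - ((n : ℝ) - m) ^ (1 - α)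
  have hsucc (m : ℕ) : caputoCoeff α n (m + 1) = b (m + 1) - b m := by
    simp only [caputoCoeff, b, Nat.succ_ne_zero, if_false]
    push_cast
    ring_nf
  have hzero : caputoCoeff α n 0 = b 0 := by simp [caputoCoeff, b]
  have hlast : b n = 1 := by
    simp only [b, sub_self, add_sub_cancel_left, Real.one_rpow,
      Real.zero_rpow (sub_ne_zero.mpr (Ne.symm hα)), sub_zero]
  rw [Finset.sum_range_succ', Finset.sum_congr rfl fun m _ => hsucc m, Finset.sum_range_sub,
    hzero, hlast, sub_add_cancel]

theorem schemeS_const {M : ℕ} (g : ℝ × ℝ → ℝ × ℝ × ℝ × ℝ → ℝ) (h c : ℝ)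
    (p : ZMod M × ZMod M) :
    schemeS g h (fun _ => c : GridFun M) p
      = g ((p.1.val : ℝ) * h, (p.2.val : ℝ) * h) (0, 0, 0, 0) := by
  simp only [schemeS, D1, D2, sub_self, zero_div]

theorem schemeG_const {M : ℕ} {α : ℝ} (hα : α ≠ 1) (Δt h : ℝ)
    (g : ℝ × ℝ → ℝ × ℝ × ℝ × ℝ → ℝ) (n : ℕ) (c : ℝ) (p : ZMod M × ZMod M) :
    schemeG α Δt h g n (fun _ _ => c) p
      = c - Real.Gamma (2 - α) * Δt ^ α
          * g ((p.1.val : ℝ) * h, (p.2.val : ℝ) * h) (0, 0, 0, 0) := by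
  simp only [schemeG, schemeS_const, ← Finset.sum_mul, sum_caputoCoeff hα n, one_mul]

theorem gamma_mul_rpow_nonneg {α Δt : ℝ} (hα : α ≤ 2) (hΔt : 0 ≤ Δt) :
    0 ≤ Real.Gamma (2 - α) * Δt ^ α :=
  mul_nonneg (Real.Gamma_nonneg_of_nonneg (by linarith)) (Real.rpow_nonneg hΔt α)

theorem abs_schemeG_le_of_monotone {M : ℕ} {α Δt : ℝ} (hα : α < 1) (hΔt : 0 ≤ Δt) (h : ℝ)
    (g : ℝ × ℝ → ℝ × ℝ × ℝ × ℝ → ℝ) (n : ℕ)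
    (hmono : ∀ U V : ℕ → GridFun M,
      (∀ m ≤ n, ∀ p, U m p ≤ V m p) → ∀ p, schemeG α Δt h g n U p ≤ schemeG α Δt h g n V p)
    {C : ℝ} (hC : ∀ x : ℝ × ℝ, |g x (0, 0, 0, 0)| ≤ C)
    {U : ℕ → GridFun M} {K : ℝ} (hK : ∀ m ≤ n, ∀ p, |U m p| ≤ K) (p : ZMod M × ZMod M) :
    |schemeG α Δt h g n U p| ≤ K + Real.Gamma (2 - α) * Δt ^ α * C := by
  set ρ := Real.Gamma (2 - α) * Δt ^ α
  set g₀ := g ((p.1.val : ℝ) * h, (p.2.val : ℝ) * h) (0, 0, 0, 0)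
  have hρ : 0 ≤ ρ := gamma_mul_rpow_nonneg (by linarith) hΔt
  have hg₀ : |ρ * g₀| ≤ ρ * C := by
    rw [abs_mul, abs_of_nonneg hρ]
    exact mul_le_mul_of_nonneg_left (hC _) hρ
  have hupper : schemeG α Δt h g n U p ≤ K - ρ * g₀ := by
    rw [← schemeG_const hα.ne]
    exact hmono _ _ (fun m hm q => (abs_le.mp (hK m hm q)).2) p
  have hlower : -K - ρ * g₀ ≤ schemeG α Δt h g n U p := by
    rw [← schemeG_const hα.ne]
    exact hmono _ _ (fun m hm q => (abs_le.mp (hK m hm q)).1) p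
  rw [abs_le]
  constructor <;> linarith [abs_le.mp hg₀]

theorem abs_le_iSup_fin_iSup {ι : Type*} [Finite ι] {n m : ℕ} (hm : m ≤ n)
    (U : ℕ → ι → ℝ) (p : ι) :
    |U m p| ≤ ⨆ k : Fin (n + 1), ⨆ q, |U (k : ℕ) q| :=
  le_ciSup_of_le (Finite.bddAbove_range _) ⟨m, Nat.lt_succ_of_le hm⟩
    (le_ciSup (Finite.bddAbove_range fun q => |U m q|) p)

theorem schemeG_sup_bound_general (α Δt : ℝ) (hα : α ∈ Set.Ioo (0 : ℝ) 1) (hΔt : 0 < Δt)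
    (M : ℕ) [NeZero M] (h : ℝ)
    (g : ℝ × ℝ → ℝ × ℝ × ℝ × ℝ → ℝ) (H : ℝ × ℝ → ℝ × ℝ → ℝ)
    (hcons : ∀ x : ℝ × ℝ, ∀ q₁ q₂ : ℝ, g x (q₁, q₁, q₂, q₂) = H x (q₁, q₂))
    (n : ℕ)
    (hmono : ∀ U V : ℕ → GridFun M,
      (∀ m ≤ n, ∀ p, U m p ≤ V m p) → ∀ p, schemeG α Δt h g n U p ≤ schemeG α Δt h g n V p)
    (U : ℕ → GridFun M) (C : ℝ) (hC : ∀ x : ℝ × ℝ, |H x (0, 0)| ≤ C) :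
    (⨆ p, |schemeG α Δt h g n U p|)
      ≤ (⨆ m : Fin (n + 1), ⨆ p, |U (m : ℕ) p|) + Real.Gamma (2 - α) * Δt ^ α * C := by
  obtain ⟨-, hα1⟩ := hα
  have hg : ∀ x : ℝ × ℝ, |g x (0, 0, 0, 0)| ≤ C := fun x => hcons x 0 0 ▸ hC x
  exact ciSup_le fun p => abs_schemeG_le_of_monotone hα1 hΔt.le h g n hmono hg
    (fun m hm q => abs_le_iSup_fin_iSup hm U q) p

/-- if the scheme is monotone and `g` is consistent with a Hamiltonian `H`,
then `‖G^n(𝒰)‖_∞ ≤ ‖𝒰‖_∞ + Γ(2−α)Δt^α · sup_x |H(x,0)|` (the sup being finite, i.e.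
bounded by some constant `C`). -/
theorem schemeG_sup_bound (α Δt : ℝ) (hα : α ∈ Set.Ioo (0 : ℝ) 1) (hΔt : 0 < Δt)
    (M : ℕ) [NeZero M] (h : ℝ) (hh : h = 1 / (M : ℝ))
    (g : ℝ × ℝ → ℝ × ℝ × ℝ × ℝ → ℝ) (H : ℝ × ℝ → ℝ × ℝ → ℝ)
    (hcons : ∀ x : ℝ × ℝ, ∀ q₁ q₂ : ℝ, g x (q₁, q₁, q₂, q₂) = H x (q₁, q₂))
    (n : ℕ)
    (hmono : ∀ U V : ℕ → GridFun M,
      (∀ m ≤ n, ∀ p, U m p ≤ V m p) → ∀ p, schemeG α Δt h g n U p ≤ schemeG α Δt h g n V p)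
    (U : ℕ → GridFun M) (C : ℝ) (hC : ∀ x : ℝ × ℝ, |H x (0, 0)| ≤ C) :
    (⨆ p, |schemeG α Δt h g n U p|)
      ≤ (⨆ m : Fin (n + 1), ⨆ p, |U (m : ℕ) p|) + Real.Gamma (2 - α) * Δt ^ α * C :=
  schemeG_sup_bound_general α Δt hα hΔt M h g H hcons n hmono U C hC

end
end

section
/- Let {U^n}_{n=0}^{N} be a sequence of grid functions generated by the scheme, i.e. U^{n+1}_{i,j} = ∑_{m=0}^{n} c_m^{n+1} U^m_{i,j} − ρ_α S(x_{i,j}, h, U^n) for all n and grid points, and suppose K ≥ 0 satisfies |S(x_{i,j}, h, U^m)| ≤ K for all grid points x_{i,j} and all m = 0,…,N−1. Then for every n = 0,…,N, ‖U^n − U^0‖_∞ ≤ (K Γ(2−α)/(α(1−α))) (nΔt)^α. -/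
/-!
Put `β = 1 - α` and `d_m = (n+1-m)^β - (n-m)^β`; then `c_0^{n+1} = d_0` and
`c_{m+1}^{n+1} = d_{m+1} - d_m`, so summation by parts gives `∑ c_m = d_n = 1` and
`∑ c_m m = n + 1 - (n+1)^β`, while concavity of `x ↦ x^β` makes every `c_m ≥ 0`.
Bounding `m^α` by its tangent line at `n + 1` and summing against these convex weights yields
`∑ c_m m^α ≤ (n+1)^α - α`. Hence if `|U^m - U^0| ≤ B m^α` for `m ≤ n`, with
`B = KΓ(2-α)Δt^α/(α(1-α))`, the scheme gives
`|U^{n+1} - U^0| ≤ B((n+1)^α - α) + ρ_α K = B((n+1)^α - α²) ≤ B (n+1)^α`.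
-/

noncomputable section

open Finset

lemma rpow_le_rpow_add_mul_sub {p x y : ℝ} (hp0 : 0 ≤ p) (hp1 : p ≤ 1) (hx : 0 ≤ x)
    (hy : 0 < y) : x ^ p ≤ y ^ p + p * y ^ (p - 1) * (x - y) := by
  have hbernoulli := rpow_one_add_le_one_add_mul_self
    (by linarith [div_nonneg hx hy.le] : -1 ≤ x / y - 1) hp0 hp1
  rw [add_sub_cancel, Real.div_rpow hx hy.le, div_le_iff₀ (by positivity)] at hbernoulli
  calc x ^ p ≤ (1 + p * (x / y - 1)) * y ^ p := hbernoulli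
    _ = y ^ p + p * (y ^ p / y) * (x - y) := by field_simp
    _ = y ^ p + p * y ^ (p - 1) * (x - y) := by rw [Real.rpow_sub_one hy.ne']

lemma sum_range_succ_mul_eq_sub_sum_mul_sub {R : Type*} [CommRing R] {c d f : ℕ → R}
    (h₀ : c 0 = d 0) (hsucc : ∀ m, c (m + 1) = d (m + 1) - d m) (n : ℕ) :
    ∑ m ∈ range (n + 1), c m * f m = d n * f n - ∑ m ∈ range n, d m * (f (m + 1) - f m) := by
  induction n with
  | zero => simp [h₀]
  | succ n ih => rw [sum_range_succ, ih, hsucc, sum_range_succ]; ring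

namespace caputoCoeff

variable {α : ℝ} {n : ℕ}

def weight (α : ℝ) (n m : ℕ) : ℝ := ((n : ℝ) + 1 - m) ^ (1 - α) - ((n : ℝ) - m) ^ (1 - α)

lemma zero_eq_weight : caputoCoeff α n 0 = weight α n 0 := by
  simp [caputoCoeff, weight]

lemma succ_eq_weight_sub (m : ℕ) :
    caputoCoeff α n (m + 1) = weight α n (m + 1) - weight α n m := by
  simp only [caputoCoeff, weight, Nat.add_one_ne_zero, if_false, Nat.cast_add, Nat.cast_one]
  rw [show (n : ℝ) + 1 - (m + 1) = n - m by ring, show (n : ℝ) + 2 - (m + 1) = n + 1 - m by ring]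
  ring

lemma weight_self (hα : α < 1) : weight α n n = 1 := by
  simp [weight, Real.zero_rpow (by linarith : 1 - α ≠ 0)]

lemma sum_mul_eq (f : ℕ → ℝ) :
    ∑ m ∈ range (n + 1), caputoCoeff α n m * f m
      = weight α n n * f n - ∑ m ∈ range n, weight α n m * (f (m + 1) - f m) :=
  sum_range_succ_mul_eq_sub_sum_mul_sub zero_eq_weight succ_eq_weight_sub n

lemma sum_eq_one (hα : α < 1) : ∑ m ∈ range (n + 1), caputoCoeff α n m = 1 := by
  simpa [weight_self hα] using sum_mul_eq (α := α) (n := n) fun _ ↦ 1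

lemma sum_mul_cast (hα : α < 1) :
    ∑ m ∈ range (n + 1), caputoCoeff α n m * m = n + 1 - ((n : ℝ) + 1) ^ (1 - α) := by
  have htelescope := sum_range_sub' (fun m : ℕ ↦ ((n : ℝ) + 1 - m) ^ (1 - α)) n
  simp only [Nat.cast_add, Nat.cast_one, sub_zero, CharP.cast_eq_zero, add_sub_cancel_left,
    Real.one_rpow, show ∀ m : ℝ, (n : ℝ) + 1 - (m + 1) = n - m from fun m ↦ by ring] at htelescope
  simp only [sum_mul_eq, weight_self hα, Nat.cast_add, Nat.cast_one, add_sub_cancel_left,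
    mul_one]
  unfold weight
  linarith

lemma nonneg (hα₀ : 0 < α) (hα₁ : α < 1) {m : ℕ} (hm : m ≤ n) : 0 ≤ caputoCoeff α n m := by
  cases m with
  | zero =>
    rw [zero_eq_weight, weight, sub_nonneg]
    exact Real.rpow_le_rpow (by simp) (by simp) (by linarith)
  | succ m =>
    have hx : (1 : ℝ) ≤ n - m := by
      rw [le_sub_iff_add_le, add_comm]; exact_mod_cast hm
    have tangent (t : ℝ) (ht : 0 ≤ (n : ℝ) - m + t) :=
      rpow_le_rpow_add_mul_sub (p := 1 - α) (by linarith) (by linarith) ht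
        (by linarith : (0 : ℝ) < n - m)
    have hup := tangent 1 (by linarith)
    have hdown := tangent (-1) (by linarith)
    rw [succ_eq_weight_sub, weight, weight, Nat.cast_add, Nat.cast_one,
      show (n : ℝ) + 1 - (m + 1) = n - m + 0 by ring, show (n : ℝ) - (m + 1) = n - m + -1 by ring,
      show (n : ℝ) + 1 - m = n - m + 1 by ring, add_zero]
    linarith

lemma sum_mul_rpow_le (hα₀ : 0 < α) (hα₁ : α < 1) :
    ∑ m ∈ range (n + 1), caputoCoeff α n m * (m : ℝ) ^ α ≤ ((n : ℝ) + 1) ^ α - α := by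
  set y : ℝ := n + 1
  have hy : 0 < y := by positivity
  calc ∑ m ∈ range (n + 1), caputoCoeff α n m * (m : ℝ) ^ α
      ≤ ∑ m ∈ range (n + 1), caputoCoeff α n m * (y ^ α + α * y ^ (α - 1) * (m - y)) := by
        refine sum_le_sum fun m hm ↦ mul_le_mul_of_nonneg_left ?_ ?_
        · exact rpow_le_rpow_add_mul_sub hα₀.le hα₁.le m.cast_nonneg hy
        · exact nonneg hα₀ hα₁ (Nat.lt_succ_iff.mp (mem_range.mp hm))
    _ = (y ^ α - α * y ^ (α - 1) * y) * ∑ m ∈ range (n + 1), caputoCoeff α n m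
          + α * y ^ (α - 1) * ∑ m ∈ range (n + 1), caputoCoeff α n m * m := by
        simp only [mul_sum, ← sum_add_distrib]
        exact sum_congr rfl fun _ _ ↦ by ring
    _ = y ^ α - α * (y ^ (α - 1) * y ^ (1 - α)) := by
        rw [sum_eq_one hα₁, sum_mul_cast hα₁]; ring
    _ = y ^ α - α := by
        rw [← Real.rpow_add hy, sub_add_sub_cancel', sub_self, Real.rpow_zero, mul_one]

end caputoCoeff

section CaputoScheme

variable {α ρ K : ℝ} {u s : ℕ → ℝ}

lemma abs_sub_le_of_caputo_step (hα₀ : 0 < α) (hα₁ : α < 1) (hρ : 0 ≤ ρ) {n : ℕ}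
    (hstep : u (n + 1) = ∑ m ∈ range (n + 1), caputoCoeff α n m * u m - ρ * s n)
    (hs : |s n| ≤ K) (hu : ∀ m ≤ n, |u m - u 0| ≤ ρ * K / (α * (1 - α)) * (m : ℝ) ^ α) :
    |u (n + 1) - u 0| ≤ ρ * K / (α * (1 - α)) * ((n : ℝ) + 1) ^ α := by
  set B := ρ * K / (α * (1 - α))
  have hαα : 0 < α * (1 - α) := mul_pos hα₀ (by linarith)
  have hB : 0 ≤ B := div_nonneg (mul_nonneg hρ ((abs_nonneg _).trans hs)) hαα.le
  have hρK : ρ * K = B * (α * (1 - α)) := (div_mul_cancel₀ _ hαα.ne').symm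
  have hc (m) (hm : m ∈ range (n + 1)) : 0 ≤ caputoCoeff α n m :=
    caputoCoeff.nonneg hα₀ hα₁ (Nat.lt_succ_iff.mp (mem_range.mp hm))
  have hdiff : u (n + 1) - u 0
      = ∑ m ∈ range (n + 1), caputoCoeff α n m * (u m - u 0) - ρ * s n := by
    rw [hstep]
    simp only [mul_sub, sum_sub_distrib, ← sum_mul, caputoCoeff.sum_eq_one hα₁]
    ring
  calc |u (n + 1) - u 0|
      ≤ ∑ m ∈ range (n + 1), caputoCoeff α n m * |u m - u 0| + ρ * |s n| := by
        rw [hdiff]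
        refine (abs_sub _ _).trans (add_le_add ((abs_sum_le_sum_abs _ _).trans_eq ?_) ?_)
        · exact sum_congr rfl fun m hm ↦ by rw [abs_mul, abs_of_nonneg (hc m hm)]
        · rw [abs_mul, abs_of_nonneg hρ]
    _ ≤ ∑ m ∈ range (n + 1), caputoCoeff α n m * (B * (m : ℝ) ^ α) + ρ * K := by
        gcongr with m hm
        · exact hc m hm
        · exact hu m (Nat.lt_succ_iff.mp (mem_range.mp hm))
    _ = B * (∑ m ∈ range (n + 1), caputoCoeff α n m * (m : ℝ) ^ α + α * (1 - α)) := by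
        rw [hρK, mul_add, mul_sum]
        exact congrArg₂ _ (sum_congr rfl fun _ _ ↦ by ring) rfl
    _ ≤ B * (((n : ℝ) + 1) ^ α - α + α * (1 - α)) := by
        gcongr
        exact caputoCoeff.sum_mul_rpow_le hα₀ hα₁
    _ ≤ B * ((n : ℝ) + 1) ^ α := by nlinarith [mul_nonneg hB (mul_self_nonneg α)]

lemma abs_sub_le_of_caputo_scheme (hα₀ : 0 < α) (hα₁ : α < 1) {Δt : ℝ} (hΔt : 0 ≤ Δt) {N : ℕ}
    (hscheme : ∀ n < N, u (n + 1)
      = ∑ m ∈ range (n + 1), caputoCoeff α n m * u m - Real.Gamma (2 - α) * Δt ^ α * s n)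
    (hs : ∀ n < N, |s n| ≤ K) :
    ∀ n ≤ N, |u n - u 0| ≤ K * Real.Gamma (2 - α) / (α * (1 - α)) * ((n : ℝ) * Δt) ^ α := by
  have hρ : 0 ≤ Real.Gamma (2 - α) * Δt ^ α :=
    mul_nonneg (Real.Gamma_pos_of_pos (by linarith)).le (Real.rpow_nonneg hΔt α)
  suffices hpow : ∀ n ≤ N, |u n - u 0|
      ≤ Real.Gamma (2 - α) * Δt ^ α * K / (α * (1 - α)) * (n : ℝ) ^ α by
    intro n hn
    rw [Real.mul_rpow n.cast_nonneg hΔt]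
    convert hpow n hn using 1
    ring
  intro n hn
  induction n using Nat.strong_induction_on with
  | _ n ih =>
    cases n with
    | zero => simp [Real.zero_rpow hα₀.ne']
    | succ n =>
      push_cast
      exact abs_sub_le_of_caputo_step hα₀ hα₁ hρ (hscheme n hn) (hs n hn)
        fun m hm ↦ ih m (Nat.lt_succ_of_le hm) (by omega)

end CaputoScheme

theorem scheme_growth_bound_general (α Δt : ℝ) (hα : α ∈ Set.Ioo (0 : ℝ) 1) (hΔt : 0 < Δt)
    (M : ℕ) (h : ℝ)
    (g : ℝ × ℝ → ℝ × ℝ × ℝ × ℝ → ℝ) (N : ℕ) (U : ℕ → GridFun M)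
    (hscheme : ∀ n < N, ∀ p,
      U (n + 1) p = (∑ m ∈ Finset.range (n + 1), caputoCoeff α n m * U m p)
        - Real.Gamma (2 - α) * Δt ^ α * schemeS g h (U n) p)
    (K : ℝ)
    (hbound : ∀ p, ∀ m < N, |schemeS g h (U m) p| ≤ K) :
    ∀ n ≤ N, (⨆ p, |U n p - U 0 p|)
      ≤ K * Real.Gamma (2 - α) / (α * (1 - α)) * ((n : ℝ) * Δt) ^ α :=
  fun n hn ↦ ciSup_le fun p ↦ abs_sub_le_of_caputo_scheme (u := (U · p)) hα.1 hα.2 hΔt.le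
    (fun k hk ↦ hscheme k hk p) (fun k hk ↦ hbound p k hk) n hn

/-- if `{U^n}_{n=0}^N` is generated by the scheme and
`|S(x_{i,j},h,U^m)| ≤ K` for all grid points and `m = 0,…,N−1`, then
`‖U^n − U^0‖_∞ ≤ (KΓ(2−α)/(α(1−α))) (nΔt)^α` for every `n = 0,…,N`. -/
theorem scheme_growth_bound (α Δt : ℝ) (hα : α ∈ Set.Ioo (0 : ℝ) 1) (hΔt : 0 < Δt)
    (M : ℕ) [NeZero M] (h : ℝ) (hh : h = 1 / (M : ℝ))
    (g : ℝ × ℝ → ℝ × ℝ × ℝ × ℝ → ℝ) (N : ℕ) (U : ℕ → GridFun M)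
    (hscheme : ∀ n < N, ∀ p,
      U (n + 1) p = (∑ m ∈ Finset.range (n + 1), caputoCoeff α n m * U m p)
        - Real.Gamma (2 - α) * Δt ^ α * schemeS g h (U n) p)
    (K : ℝ) (hK : 0 ≤ K)
    (hbound : ∀ p, ∀ m < N, |schemeS g h (U m) p| ≤ K) :
    ∀ n ≤ N, (⨆ p, |U n p - U 0 p|)
      ≤ K * Real.Gamma (2 - α) / (α * (1 - α)) * ((n : ℝ) * Δt) ^ α :=
  scheme_growth_bound_general α Δt hα hΔt M h g N U hscheme K hbound

end
end
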